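/- There exists an optimal prefix-free machine that is not universal by adjunction. In particular, given any universal-by-adjunction prefix-free machine U, the machine V defined by V(p0) = V(p1) = U(p) for p ∈ dom(U) with |p| odd, and V(p) = U(p) for p ∈ dom(U) with |p| even, is a prefix-free machine that is optimal but not universal by adjunction. -/

import Mathlib

open scoped ENNReal

namespace Paper

/-- A set of binary strings is prefix-free if no two distinct elements are
comparable under the prefix relation. -/
def PrefixFreeSet (D : Set (List Bool)) : Prop :=
  ∀ σ ∈ D, ∀ τ ∈ D, σ <+: τ → σ = τ

/-- A prefix-free machine: a partial computable function from binary strings to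
binary strings with prefix-free domain. -/
def PrefixFreeMachine (M : List Bool →. List Bool) : Prop :=
  Partrec M ∧ PrefixFreeSet M.Dom

/-- The halting probability `Ω_M = ∑_{σ ∈ dom M} 2^{-|σ|}`. -/
noncomputable def Omega (M : List Bool →. List Bool) : ℝ :=
  ∑' σ : M.Dom, (2 : ℝ) ^ (-((σ : List Bool).length : ℤ))

/-- `K_M(x) = min {|p| : M(p) = x}`, with value `∞` if no description exists. -/
noncomputable def KM (M : List Bool →. List Bool) (x : List Bool) : ℕ∞ :=
  sInf {n : ℕ∞ | ∃ p : List Bool, x ∈ M p ∧ (p.length : ℕ∞) = n}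

/-- A prefix-free machine `U` is optimal if `K_U ≤ K_M + c_M` for every
prefix-free machine `M`. -/
def OptimalMachine (U : List Bool →. List Bool) : Prop :=
  PrefixFreeMachine U ∧
    ∀ M : List Bool →. List Bool, PrefixFreeMachine M →
      ∃ c : ℕ, ∀ x, KM U x ≤ KM M x + (c : ℕ∞)

/-- A standard effective enumeration of all prefix-free machines. -/
def MachineEnumeration (Mach : ℕ → (List Bool →. List Bool)) : Prop :=
  (∀ e, PrefixFreeMachine (Mach e)) ∧
  Partrec₂ Mach ∧
  ∀ M : List Bool →. List Bool, PrefixFreeMachine M → ∃ e, Mach e = M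

/-- `U` is universal by adjunction (relative to the enumeration `Mach`). -/
def UniversalByAdjunction (Mach : ℕ → (List Bool →. List Bool))
    (U : List Bool →. List Bool) : Prop :=
  PrefixFreeMachine U ∧
    ∃ σ : ℕ → List Bool, Computable σ ∧ PrefixFreeSet (Set.range σ) ∧
      ∀ e τ, U (σ e ++ τ) = Mach e τ

/-- A real is left-c.e. if it is the limit of a computable nondecreasing
sequence of rationals. -/
def LeftCE (α : ℝ) : Prop :=
  ∃ q : ℕ → ℚ, Computable q ∧ Monotone q ∧
    Filter.Tendsto (fun n => (q n : ℝ)) Filter.atTop (nhds α)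

/-- A real is right-c.e. if it is the limit of a computable nonincreasing
sequence of rationals. -/
def RightCE (α : ℝ) : Prop :=
  ∃ q : ℕ → ℚ, Computable q ∧ Antitone q ∧
    Filter.Tendsto (fun n => (q n : ℝ)) Filter.atTop (nhds α)

/-- A real is computable if it is both left-c.e. and right-c.e. -/
def ComputableReal (α : ℝ) : Prop := LeftCE α ∧ RightCE α

/-- `e` is an index for the left-c.e. real `α`: in the standard enumeration of
partial computable functions, `e` codes a (total, nondecreasing) sequence of
rationals converging to `α`. -/
def LeftCEIndex (e : ℕ) (α : ℝ) : Prop :=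
  ∃ q : ℕ → ℚ,
    (∀ n, (Denumerable.ofNat Nat.Partrec.Code e).eval n =
        Part.some (Encodable.encode (q n))) ∧
    Monotone q ∧ Filter.Tendsto (fun n => (q n : ℝ)) Filter.atTop (nhds α)

/-- A computably enumerable set. -/
def CEset {α : Type*} [Primcodable α] (S : Set α) : Prop :=
  Partrec fun a => Part.assert (a ∈ S) fun _ => Part.some ()

/-- A Martin-Löf test: a uniformly effectively open sequence of sets of reals
with `λ(V n) ≤ 2^{-n}`. -/
def MLTest (V : ℕ → Set ℝ) : Prop :=
  (∃ S : Set (ℕ × ℚ × ℚ), CEset S ∧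
      ∀ n, V n = ⋃ p ∈ {p : ℚ × ℚ | (n, p.1, p.2) ∈ S},
        Set.Ioo (p.1 : ℝ) (p.2 : ℝ)) ∧
  ∀ n, MeasureTheory.volume (V n) ≤ 2 ^ (-(n : ℤ))

/-- A real is Martin-Löf random if it escapes every Martin-Löf test. -/
def MLRandom (x : ℝ) : Prop := ∀ V : ℕ → Set ℝ, MLTest V → ∃ n, x ∉ V n

/-- The c.e. set of triples generated by the `e`-th partial computable
function (as the domain of that function). -/
def TestSet (e : ℕ) : Set (ℕ × ℚ × ℚ) :=
  {x | ((Denumerable.ofNat Nat.Partrec.Code e).eval (Encodable.encode x)).Dom}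

/-- The sequence of effectively open sets generated by the `e`-th c.e. set of
triples. -/
def TestOfIndex (e : ℕ) : ℕ → Set ℝ := fun n =>
  ⋃ p ∈ {p : ℚ × ℚ | (n, p.1, p.2) ∈ TestSet e}, Set.Ioo (p.1 : ℝ) (p.2 : ℝ)

/-- An effectively optimal Martin-Löf test. -/
def EffectivelyOptimalMLTest (U : ℕ → Set ℝ) : Prop :=
  MLTest U ∧
    ∃ g : ℕ → ℕ, Computable g ∧
      ∀ i, MLTest (TestOfIndex i) → ∀ k, TestOfIndex i (k + g i) ⊆ U k

/-- A semimeasure: a nonnegative function on ℕ whose (partial) sums are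
bounded by 1. -/
def Semimeasure (m : ℕ → ℝ) : Prop :=
  (∀ i, 0 ≤ m i) ∧ ∀ F : Finset ℕ, ∑ i ∈ F, m i ≤ 1

/-- A left-c.e. semimeasure. -/
def LeftCESemimeasure (m : ℕ → ℝ) : Prop :=
  Semimeasure m ∧ CEset {p : ℕ × ℚ | (p.2 : ℝ) < m p.1}

/-- `e` is a c.e. index for the set of rationals lying below the semimeasure
`m`. -/
def SemimeasureIndex (e : ℕ) (m : ℕ → ℝ) : Prop :=
  Semimeasure m ∧
    ∀ p : ℕ × ℚ,
      ((Denumerable.ofNat Nat.Partrec.Code e).eval (Encodable.encode p)).Dom ↔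
        (p.2 : ℝ) < m p.1

/-- A universal left-c.e. semimeasure: one that multiplicatively dominates
every left-c.e. semimeasure. -/
def UniversalSemimeasure (m : ℕ → ℝ) : Prop :=
  LeftCESemimeasure m ∧
    ∀ μ : ℕ → ℝ, LeftCESemimeasure μ →
      ∃ c : ℚ, 0 < c ∧ ∀ i, (c : ℝ) * μ i ≤ m i

/-- Solovay reducibility: `α ⪯_S β` iff `n·β − α` is left-c.e. for some
positive integer `n`. -/
def SolovayLE (α β : ℝ) : Prop :=
  ∃ n : ℕ, 0 < n ∧ LeftCE ((n : ℝ) * β - α)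

/-- The fixed computable bijection between ℕ and binary strings
(`n ↦` the binary expansion of `n+1` with the leading bit removed). -/
def strOfNat (n : ℕ) : List Bool := (Nat.bits (n + 1)).dropLast

/-!
Padding each odd-length description of a universal-by-adjunction machine `U` with one extra bit
gives a machine `V` whose domain is still prefix-free, consists of even-length strings only, and
whose descriptions are at most one bit longer than those of `U`; so `V` is optimal. If `V` were
universal by adjunction with codes `σ e`, then for the index `e` of a machine with domain
`{0, 11}` both `σ e ++ 0` and `σ e ++ 11` would lie in the domain of `V`, although their lengths
have different parity.
-/

open List

lemma KM_le_length {M : List Bool →. List Bool} {p x : List Bool} (h : x ∈ M p) :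
    KM M x ≤ p.length :=
  sInf_le ⟨p, h, rfl⟩

lemma exists_length_eq_KM {M : List Bool →. List Bool} {x : List Bool} (h : KM M x ≠ ⊤) :
    ∃ p, x ∈ M p ∧ (p.length : ℕ∞) = KM M x := by
  have hS : {n : ℕ∞ | ∃ p, x ∈ M p ∧ (p.length : ℕ∞) = n}.Nonempty :=
    Set.nonempty_iff_ne_empty.mpr fun hS => h (by rw [KM, hS, sInf_empty])
  exact csInf_mem hS

lemma KM_le_KM_add {M N : List Bool →. List Bool} (c : ℕ)
    (h : ∀ p x, x ∈ M p → ∃ q, x ∈ N q ∧ q.length ≤ p.length + c) (x : List Bool) :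
    KM N x ≤ KM M x + c := by
  by_cases hx : KM M x = ⊤
  · simp [hx]
  obtain ⟨p, hp, hlen⟩ := exists_length_eq_KM hx
  obtain ⟨q, hq, hle⟩ := h p x hp
  calc KM N x ≤ q.length := KM_le_length hq
    _ ≤ (p.length + c : ℕ) := by exact_mod_cast hle
    _ = KM M x + c := by rw [Nat.cast_add, hlen]

lemma OptimalMachine.of_KM_le {U V : List Bool →. List Bool} (hU : OptimalMachine U)
    (hV : PrefixFreeMachine V) (c : ℕ) (h : ∀ x, KM V x ≤ KM U x + c) : OptimalMachine V := by
  refine ⟨hV, fun M hM => ?_⟩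
  obtain ⟨d, hd⟩ := hU.2 M hM
  refine ⟨d + c, fun x => ?_⟩
  calc KM V x ≤ KM U x + c := h x
    _ ≤ KM M x + d + c := by gcongr; exact hd x
    _ = KM M x + (d + c : ℕ) := by push_cast; rw [add_assoc]

lemma UniversalByAdjunction.optimalMachine {Mach : ℕ → (List Bool →. List Bool)}
    (hMach : ∀ M, PrefixFreeMachine M → ∃ e, Mach e = M) {U : List Bool →. List Bool}
    (hU : UniversalByAdjunction Mach U) : OptimalMachine U := by
  obtain ⟨hUpf, σ, -, -, hσ⟩ := hU
  refine ⟨hUpf, fun M hM => ?_⟩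
  obtain ⟨e, rfl⟩ := hMach M hM
  exact ⟨(σ e).length, KM_le_KM_add _ fun p x hx =>
    ⟨σ e ++ p, by rwa [hσ], by rw [length_append, Nat.add_comm]⟩⟩

lemma PrefixFreeSet.of_parent {D E : Set (List Bool)} (hD : PrefixFreeSet D) (ℓ : ℕ → ℕ)
    (h : ∀ q ∈ E, ∃ p ∈ D, p <+: q ∧ q.length = ℓ p.length) : PrefixFreeSet E := by
  intro q hq q' hq' hqq'
  obtain ⟨p, hp, hpq, hℓ⟩ := h q hq
  obtain ⟨p', hp', hpq', hℓ'⟩ := h q' hq'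
  have hpp' : p = p' := by
    rcases prefix_or_prefix_of_prefix (hpq.trans hqq') hpq' with hle | hle
    · exact hD p hp p' hp' hle
    · exact (hD p' hp' p hp hle).symm
  exact hqq'.eq_of_length (by rw [hℓ, hℓ', hpp'])

lemma PrefixFreeSet.dropLast_notMem {D : Set (List Bool)} (hD : PrefixFreeSet D) {q : List Bool}
    (hq : q ∈ D) (hne : q ≠ []) : q.dropLast ∉ D := fun h => by
  have := congrArg length (hD _ h q hq (dropLast_prefix q))
  rw [length_dropLast] at this
  have := length_pos_of_ne_nil hne
  omega

lemma replicate_true_append_prefix {e e' : ℕ} {τ τ' : List Bool}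
    (h : replicate e true ++ false :: τ <+: replicate e' true ++ false :: τ') :
    e = e' ∧ τ <+: τ' := by
  induction e generalizing e' with
  | zero => cases e' <;> simp_all [replicate_succ, cons_prefix_cons]
  | succ k ih =>
    cases e' with
    | zero => simp [replicate_succ, cons_prefix_cons] at h
    | succ k' =>
      simp only [replicate_succ, cons_append, cons_prefix_cons, true_and] at h
      exact (ih h).imp_left (congrArg _)

def decodeUnary (q : List Bool) : Option (ℕ × List Bool) :=
  if q.idxOf false < q.length then some (q.idxOf false, q.drop (q.idxOf false + 1)) else none

lemma decodeUnary_false_cons (q : List Bool) : decodeUnary (false :: q) = some (0, q) := by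
  simp [decodeUnary]

lemma decodeUnary_true_cons (q : List Bool) :
    decodeUnary (true :: q) = (decodeUnary q).map fun p => (p.1 + 1, p.2) := by
  unfold decodeUnary
  split_ifs <;> simp_all [idxOf_cons_ne]

lemma decodeUnary_eq_some_iff {q τ : List Bool} {e : ℕ} :
    decodeUnary q = some (e, τ) ↔ q = replicate e true ++ false :: τ := by
  induction q generalizing e with
  | nil => simp [decodeUnary]
  | cons b q ih =>
    cases b <;> cases e <;>
      simp [decodeUnary_false_cons, decodeUnary_true_cons, replicate_succ, ih]

lemma primrec_decodeUnary : Primrec decodeUnary := by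
  have hidx : Primrec fun q : List Bool => q.idxOf false :=
    Primrec.list_idxOf.comp (Primrec.const false) Primrec.id
  exact Primrec.ite (Primrec.nat_lt.comp hidx Primrec.list_length)
    (Primrec.option_some.comp (hidx.pair (Primrec.list_drop.comp (Primrec.succ.comp hidx)
      Primrec.id)))
    (Primrec.const none)

def adjunctionMachine (Mach : ℕ → (List Bool →. List Bool)) : List Bool →. List Bool :=
  fun q => (decodeUnary q : Part (ℕ × List Bool)).bind fun p => Mach p.1 p.2

lemma mem_adjunctionMachine {Mach : ℕ → (List Bool →. List Bool)} {q x : List Bool} :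
    x ∈ adjunctionMachine Mach q ↔ ∃ e τ, q = replicate e true ++ false :: τ ∧ x ∈ Mach e τ := by
  simp only [adjunctionMachine, Part.mem_bind_iff, Part.mem_ofOption, Option.mem_def,
    Prod.exists, decodeUnary_eq_some_iff]

lemma universalByAdjunction_adjunctionMachine {Mach : ℕ → (List Bool →. List Bool)}
    (hpf : ∀ e, PrefixFreeSet (Mach e).Dom) (hMach : Partrec₂ Mach) :
    UniversalByAdjunction Mach (adjunctionMachine Mach) := by
  refine ⟨⟨?_, ?_⟩, fun e => replicate e true ++ [false], ?_, ?_, fun e τ => ?_⟩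
  · exact (Computable.ofOption primrec_decodeUnary.to_comp).bind (hMach.comp
      (Computable.fst.comp Computable.snd) (Computable.snd.comp Computable.snd))
  · intro q hq q' hq' hqq'
    obtain ⟨e, τ, rfl, hτ⟩ := mem_adjunctionMachine.mp (Part.get_mem hq)
    obtain ⟨e', τ', rfl, hτ'⟩ := mem_adjunctionMachine.mp (Part.get_mem hq')
    obtain ⟨rfl, hττ'⟩ := replicate_true_append_prefix hqq'
    rw [hpf e τ (Part.dom_iff_mem.mpr ⟨_, hτ⟩) τ' (Part.dom_iff_mem.mpr ⟨_, hτ'⟩) hττ']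
  · exact (Primrec.list_concat.comp ((Primrec.list_map Primrec.list_range
      (Primrec.const true).to₂).of_eq fun e => by simp) (Primrec.const false)).to_comp
  · rintro _ ⟨e, rfl⟩ _ ⟨e', rfl⟩ h
    rw [(replicate_true_append_prefix (τ := []) (τ' := []) h).1]
  · have : decodeUnary (replicate e true ++ [false] ++ τ) = some (e, τ) :=
      decodeUnary_eq_some_iff.mpr (by simp)
    simp only [adjunctionMachine, this, Part.coe_some, Part.bind_some]

def mixedParityMachine : List Bool →. List Bool :=
  fun q => ((if q = [false] ∨ q = [true, true] then some [] else none : Option (List Bool)) :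
    Part (List Bool))

lemma mem_mixedParityMachine_dom {q : List Bool} :
    q ∈ mixedParityMachine.Dom ↔ q = [false] ∨ q = [true, true] := by
  by_cases hq : q = [false] ∨ q = [true, true] <;> simp [mixedParityMachine, PFun.Dom, hq]

lemma prefixFreeMachine_mixedParityMachine : PrefixFreeMachine mixedParityMachine := by
  refine ⟨Computable.ofOption (Primrec.ite ?_ (Primrec.const _) (Primrec.const _)).to_comp, ?_⟩
  · exact PrimrecPred.or (Primrec.eq.comp Primrec.id (Primrec.const _))
      (Primrec.eq.comp Primrec.id (Primrec.const _))
  · intro q hq q' hq' h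
    rcases mem_mixedParityMachine_dom.mp hq with rfl | rfl <;>
      rcases mem_mixedParityMachine_dom.mp hq' with rfl | rfl <;>
      simp_all [cons_prefix_cons]

lemma not_universalByAdjunction_of_length_even {Mach : ℕ → (List Bool →. List Bool)}
    (hMach : ∀ M, PrefixFreeMachine M → ∃ e, Mach e = M) {V : List Bool →. List Bool}
    (hV : ∀ q ∈ V.Dom, q.length % 2 = 0) : ¬ UniversalByAdjunction Mach V := by
  rintro ⟨-, σ, -, -, hσ⟩
  obtain ⟨e, he⟩ := hMach _ prefixFreeMachine_mixedParityMachine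
  have heven : ∀ τ ∈ mixedParityMachine.Dom, (σ e ++ τ).length % 2 = 0 := fun τ hτ =>
    hV _ (show (V (σ e ++ τ)).Dom by rwa [hσ, he])
  have h1 := heven [false] (mem_mixedParityMachine_dom.mpr (Or.inl rfl))
  have h2 := heven [true, true] (mem_mixedParityMachine_dom.mpr (Or.inr rfl))
  simp only [length_append, length_cons, length_nil] at h1 h2
  omega

def IsEvenPadding (U V : List Bool →. List Bool) : Prop :=
  (∀ p ∈ U.Dom, p.length % 2 = 1 → V (p ++ [false]) = U p ∧ V (p ++ [true]) = U p) ∧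
  (∀ p ∈ U.Dom, p.length % 2 = 0 → V p = U p) ∧
  V.Dom = {q | (∃ p ∈ U.Dom, p.length % 2 = 1 ∧ (q = p ++ [false] ∨ q = p ++ [true])) ∨
    (q ∈ U.Dom ∧ q.length % 2 = 0)}

namespace IsEvenPadding

variable {U V : List Bool →. List Bool}

lemma length_mod_two (h : IsEvenPadding U V) {q : List Bool} (hq : q ∈ V.Dom) :
    q.length % 2 = 0 := by
  rw [h.2.2] at hq
  rcases hq with ⟨p, -, hodd, rfl | rfl⟩ | ⟨-, hev⟩
  · simp only [length_append, length_singleton]; omega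
  · simp only [length_append, length_singleton]; omega
  · exact hev

lemma prefixFreeSet (h : IsEvenPadding U V) (hU : PrefixFreeSet U.Dom) : PrefixFreeSet V.Dom :=
  hU.of_parent (fun n => n + n % 2) fun q hq => by
    rw [h.2.2] at hq
    rcases hq with ⟨p, hp, hodd, rfl | rfl⟩ | ⟨hq, hev⟩
    · exact ⟨p, hp, prefix_append _ _, by simp [hodd]⟩
    · exact ⟨p, hp, prefix_append _ _, by simp [hodd]⟩
    · exact ⟨q, hq, prefix_rfl, by simp [hev]⟩

lemma KM_le (h : IsEvenPadding U V) (x : List Bool) : KM V x ≤ KM U x + 1 :=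
  KM_le_KM_add 1 (fun p x hp => by
    have hpU : p ∈ U.Dom := Part.dom_iff_mem.mpr ⟨x, hp⟩
    rcases Nat.mod_two_eq_zero_or_one p.length with hev | hodd
    · exact ⟨p, by rwa [h.2.1 p hpU hev], by omega⟩
    · exact ⟨p ++ [false], by rwa [(h.1 p hpU hodd).1], by simp⟩) x

end IsEvenPadding

lemma isEvenPadding_of_mem_iff {U V : List Bool →. List Bool} (hU : PrefixFreeSet U.Dom)
    (hV : ∀ q x, x ∈ V q ↔ q.length % 2 = 0 ∧ (x ∈ U q ∨ x ∈ U q.dropLast)) :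
    IsEvenPadding U V := by
  have hmem : ∀ {q x}, x ∈ U q → q ∈ U.Dom := fun hx => Part.dom_iff_mem.mpr ⟨_, hx⟩
  have hdom : ∀ q, q ∈ V.Dom ↔ q.length % 2 = 0 ∧ (q ∈ U.Dom ∨ q.dropLast ∈ U.Dom) := by
    simp only [PFun.mem_dom, hV, exists_and_left, exists_or, implies_true]
  refine ⟨fun p hp hodd => ?_, fun p hp hev => Part.ext fun x => ?_, Set.ext fun q => ?_⟩
  · have hpad : ∀ b, V (p ++ [b]) = U p := fun b => Part.ext fun x => by
      rw [hV, dropLast_concat, length_append, length_singleton, and_iff_right (by omega),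
        or_iff_right fun hx => hU.dropLast_notMem (hmem hx) (by simp) (by simpa using hp)]
    exact ⟨hpad false, hpad true⟩
  · rw [hV, and_iff_right hev, or_iff_left_of_imp fun hx => ?_]
    rcases eq_or_ne p [] with rfl | hne
    · exact hx
    · exact absurd (hmem hx) (hU.dropLast_notMem hp hne)
  · rw [hdom]
    constructor
    · rintro ⟨hev, hq | hq⟩
      · exact Or.inr ⟨hq, hev⟩
      rcases eq_or_ne q [] with rfl | hne
      · exact Or.inr ⟨hq, hev⟩
      refine Or.inl ⟨q.dropLast, hq, ?_, ?_⟩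
      · rw [length_dropLast]
        have := length_pos_of_ne_nil hne
        omega
      · rw [← dropLast_append_getLast hne]
        cases q.getLast hne <;> simp
    · rintro (⟨p, hp, hodd, rfl | rfl⟩ | ⟨hq, hev⟩)
      · exact ⟨by simp; omega, Or.inr (by simpa using hp)⟩
      · exact ⟨by simp; omega, Or.inr (by simpa using hp)⟩
      · exact ⟨hev, Or.inl hq⟩

/-- Dovetailing `U q` and `U q.dropLast` is consistent because, by prefix-freeness, both are
defined only when `q = []`. -/
lemma exists_mem_iff_mem_or_mem_dropLast {U : List Bool →. List Bool} (hU : Partrec U)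
    (hpf : PrefixFreeSet U.Dom) :
    ∃ W : List Bool →. List Bool, Partrec W ∧ ∀ q x, x ∈ W q ↔ x ∈ U q ∨ x ∈ U q.dropLast := by
  refine Partrec.merge hU (hU.comp (Primrec.list_reverse.comp (Primrec.list_tail.comp
    Primrec.list_reverse)).to_comp |>.of_eq fun q => ?_) fun q x hx y hy => ?_
  · rw [tail_reverse, reverse_reverse]
  · rcases eq_or_ne q [] with rfl | hne
    · exact Part.mem_unique hx hy
    · exact absurd (Part.dom_iff_mem.mpr ⟨y, hy⟩)
        (hpf.dropLast_notMem (Part.dom_iff_mem.mpr ⟨x, hx⟩) hne)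

lemma exists_isEvenPadding {U : List Bool →. List Bool} (hU : Partrec U)
    (hpf : PrefixFreeSet U.Dom) : ∃ V, Partrec V ∧ IsEvenPadding U V := by
  obtain ⟨W, hW, hWmem⟩ := exists_mem_iff_mem_or_mem_dropLast hU hpf
  have heven : Computable fun q : List Bool => decide (q.length % 2 = 0) :=
    (Primrec.eq.comp (Primrec.nat_mod.comp Primrec.list_length (Primrec.const 2))
      (Primrec.const 0)).decide.to_comp
  refine ⟨fun q => if q.length % 2 = 0 then W q else Part.none,
    (Partrec.cond heven hW Partrec.none).of_eq fun q => by simp [Bool.cond_decide],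
    isEvenPadding_of_mem_iff hpf fun q x => ?_⟩
  split_ifs with h <;> simp [h, hWmem]

/-- There is an optimal prefix-free machine that is not universal
by adjunction; in particular, from any universal-by-adjunction machine `U`,
the machine `V` with `V(p0) = V(p1) = U(p)` for `|p|` odd and `V(p) = U(p)`
for `|p|` even is prefix-free and optimal but not universal by adjunction. -/
theorem optimal_not_universal_by_adjunction
    (Mach : ℕ → (List Bool →. List Bool)) (hMach : MachineEnumeration Mach) :
    (∃ M : List Bool →. List Bool,
        OptimalMachine M ∧ ¬ UniversalByAdjunction Mach M) ∧
    ∀ U : List Bool →. List Bool, UniversalByAdjunction Mach U →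
      ∀ V : List Bool →. List Bool, Partrec V →
        (∀ p ∈ U.Dom, p.length % 2 = 1 →
          V (p ++ [false]) = U p ∧ V (p ++ [true]) = U p) →
        (∀ p ∈ U.Dom, p.length % 2 = 0 → V p = U p) →
        V.Dom = {q | (∃ p ∈ U.Dom, p.length % 2 = 1 ∧
            (q = p ++ [false] ∨ q = p ++ [true])) ∨
            (q ∈ U.Dom ∧ q.length % 2 = 0)} →
        PrefixFreeMachine V ∧ OptimalMachine V ∧
          ¬ UniversalByAdjunction Mach V := by
  obtain ⟨hpf, hrec, hsurj⟩ := hMach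
  have key : ∀ U, UniversalByAdjunction Mach U → ∀ V, Partrec V → IsEvenPadding U V →
      PrefixFreeMachine V ∧ OptimalMachine V ∧ ¬ UniversalByAdjunction Mach V := by
    intro U hU V hV hpad
    have hVpf : PrefixFreeMachine V := ⟨hV, hpad.prefixFreeSet hU.1.2⟩
    exact ⟨hVpf, (hU.optimalMachine hsurj).of_KM_le hVpf 1 hpad.KM_le,
      not_universalByAdjunction_of_length_even hsurj fun _ => hpad.length_mod_two⟩
  refine ⟨?_, fun U hU V hV hodd heven hdom => key U hU V hV ⟨hodd, heven, hdom⟩⟩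
  have hU := universalByAdjunction_adjunctionMachine (fun e => (hpf e).2) hrec
  obtain ⟨V, hV, hpad⟩ := exists_isEvenPadding hU.1.1 hU.1.2
  exact ⟨V, (key _ hU V hV hpad).2⟩

end Paper
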